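/- Let M = (X, rk) be a finite matroid of rank 2 with no loops and no coloops. Then Σ_{A ⊆ X} (−1)^{|A|} C(|A| − rk(A), 2) equals 1 if p(M) = 2, and equals p'(M) if p(M) = 3, where C(n,2) = n(n−1)/2, p(M) is the number of parallel classes of M, and p'(M) is the number of parallel classes of M with at least two elements. -/

import Mathlib

open Finset MvPolynomial

open scoped Classical

noncomputable section

variable {α : Type*} [Fintype α] [DecidableEq α]

/-- The three rank axioms of a matroid on ground set `Finset.univ`. -/
def IsRankFn (rk : Finset α → ℕ) : Prop :=
  (∀ A : Finset α, rk A ≤ A.card) ∧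
  (∀ A B : Finset α, A ⊆ B → rk A ≤ rk B) ∧
  (∀ A B : Finset α, rk (A ∪ B) + rk (A ∩ B) ≤ rk A + rk B)

/-- A matroid is loopless if no singleton has rank `0`. -/
def Loopless (rk : Finset α → ℕ) : Prop := ∀ e : α, rk {e} ≠ 0

/-- The multiplicity Tutte polynomial, with `X 0` playing the role of `x`
and `X 1` that of `y`. -/
def multTutte (rk : Finset α → ℕ) (m : Finset α → ℤ) : MvPolynomial (Fin 2) ℤ :=
  ∑ A : Finset α, MvPolynomial.C (m A) *
    (MvPolynomial.X 0 - 1) ^ (rk Finset.univ - rk A) *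
    (MvPolynomial.X 1 - 1) ^ (A.card - rk A)

/-- `coeffB rk m i j` is the coefficient `b_{i,j}` of `x^i y^j` in the
multiplicity Tutte polynomial. -/
def coeffB (rk : Finset α → ℕ) (m : Finset α → ℤ) (i j : ℕ) : ℤ :=
  MvPolynomial.coeff (Finsupp.single 0 i + Finsupp.single 1 j) (multTutte rk m)

/-- The (ordinary) Tutte polynomial of a matroid. -/
def tutte (rk : Finset α → ℕ) : MvPolynomial (Fin 2) ℤ :=
  ∑ A : Finset α,
    (MvPolynomial.X 0 - 1) ^ (rk Finset.univ - rk A) *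
    (MvPolynomial.X 1 - 1) ^ (A.card - rk A)

/-- `coeffT rk i j` is the coefficient `t_{i,j}` of `x^i y^j` in the Tutte polynomial. -/
def coeffT (rk : Finset α → ℕ) (i j : ℕ) : ℤ :=
  MvPolynomial.coeff (Finsupp.single 0 i + Finsupp.single 1 j) (tutte rk)

/-- `F` is a flat: it equals its closure. -/
def IsFlat (rk : Finset α → ℕ) (F : Finset α) : Prop :=
  ∀ e : α, rk (insert e F) = rk F → e ∈ F

/-- The set `𝓕_i(M)` of flats of rank `i`. -/
def flats (rk : Finset α → ℕ) (i : ℕ) : Finset (Finset α) :=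
  Finset.univ.filter (fun F => IsFlat rk F ∧ rk F = i)

/-- `C` is a circuit: `rk (C \ {e}) = |C| - 1 = rk C` for every `e ∈ C`. -/
def IsCircuit (rk : Finset α → ℕ) (C : Finset α) : Prop :=
  ∀ e ∈ C, rk (C.erase e) = C.card - 1 ∧ rk C = C.card - 1

/-- A flat is cyclic if every element of it lies on a circuit contained in it. -/
def IsCyclicFlat (rk : Finset α → ℕ) (F : Finset α) : Prop :=
  IsFlat rk F ∧ ∀ e ∈ F, ∃ C ⊆ F, IsCircuit rk C ∧ e ∈ C

/-- The set `𝓕'_i(M)` of cyclic flats of rank `i`. -/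
def cyclicFlats (rk : Finset α → ℕ) (i : ℕ) : Finset (Finset α) :=
  Finset.univ.filter (fun F => IsCyclicFlat rk F ∧ rk F = i)

/-- Two elements are parallel. -/
def Parallel (rk : Finset α → ℕ) (e f : α) : Prop :=
  rk {e, f} = 1 ∧ rk {e} = 1 ∧ rk {f} = 1

/-- `P` is a set whose distinct elements are pairwise parallel and which contains no loop. -/
def PairwiseParallel (rk : Finset α → ℕ) (P : Finset α) : Prop :=
  (∀ e ∈ P, ∀ f ∈ P, e ≠ f → Parallel rk e f) ∧ ∀ e ∈ P, rk {e} ≠ 0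

/-- `P` is a parallel class of the matroid restricted to the ground set `S`:
a maximal nonempty subset of `S` whose distinct elements are pairwise parallel
and which contains no loop. -/
def IsParallelClass (rk : Finset α → ℕ) (S P : Finset α) : Prop :=
  P ⊆ S ∧ P.Nonempty ∧ PairwiseParallel rk P ∧
    ∀ Q : Finset α, Q ⊆ S → P ⊂ Q → ¬ PairwiseParallel rk Q

/-- The parallel classes of the matroid restricted to the ground set `S`. -/
def parallelClasses (rk : Finset α → ℕ) (S : Finset α) : Finset (Finset α) :=
  Finset.univ.filter (fun P => IsParallelClass rk S P)

/-- `p`, the number of parallel classes (of the restriction to `S`). -/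
def pNum (rk : Finset α → ℕ) (S : Finset α) : ℕ := (parallelClasses rk S).card

/-- `p'`, the number of non-trivial parallel classes (of the restriction to `S`). -/
def pNum' (rk : Finset α → ℕ) (S : Finset α) : ℕ :=
  ((parallelClasses rk S).filter (fun P => 2 ≤ P.card)).card

/-- The rank function of the contraction `M/T`. -/
def contractRk (rk : Finset α → ℕ) (T : Finset α) (A : Finset α) : ℕ :=
  rk (A ∪ T) - rk T

/-- The number of parallel classes of the contraction `M/T`. -/
def pNumContract (rk : Finset α → ℕ) (T : Finset α) : ℕ :=
  pNum (contractRk rk T) (Finset.univ \ T)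


/-- The one-variable polynomial `T_M(x, 0)`. -/
def tutteAtYZero (rk : Finset α → ℕ) : Polynomial ℤ :=
  ∑ A : Finset α, Polynomial.C ((-1 : ℤ) ^ (A.card - rk A)) *
    (Polynomial.X - 1) ^ (rk Finset.univ - rk A)

end

section Aux

open Finset

/-! ### Alternating sum lemma -/

private lemma altsum (j : ℕ) : ∀ {β : Type*} [DecidableEq β] (s : Finset β), j < s.card →
    ∑ A ∈ s.powerset, (-1:ℤ)^A.card * (A.card.choose j) = 0 := by
  induction j with
  | zero =>
    intro β _ s hs
    simp only [Nat.choose_zero_right, Nat.cast_one, mul_one]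
    exact sum_powerset_neg_one_pow_card_of_nonempty (card_pos.mp hs)
  | succ j ih =>
    intro β _ s hs
    induction s using Finset.induction_on with
    | empty => simp at hs
    | insert a t ha iht =>
      rw [powerset_insert, sum_union, sum_image]
      · have h1 : ∀ A ∈ t.powerset, (-1:ℤ)^A.card * (A.card.choose (j+1))
            + (-1:ℤ)^(insert a A).card * ((insert a A).card.choose (j+1))
            = -((-1:ℤ)^A.card * (A.card.choose j)) := by
          intro A hA
          have haA : a ∉ A := fun h => ha (mem_powerset.mp hA h)
          rw [card_insert_of_notMem haA, Nat.choose_succ_succ A.card j]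
          push_cast
          ring
        rw [← sum_add_distrib, sum_congr rfl h1, sum_neg_distrib,
          ih t (by rw [card_insert_of_notMem ha] at hs; omega), neg_zero]
      · intro A hA B hB hAB
        have haA : a ∉ A := fun h => ha (mem_powerset.mp hA h)
        have haB : a ∉ B := fun h => ha (mem_powerset.mp hB h)
        rw [← erase_insert haA, ← erase_insert haB, hAB]
      · rw [disjoint_left]
        intro A hA hA2
        obtain ⟨B, hB, rfl⟩ := mem_image.mp hA2
        exact ha (mem_powerset.mp hA (mem_insert_self a B))

private lemma sum_shape {β : Type*} [DecidableEq β] (s : Finset β) (c2 c1 c0 d0 d1 : ℤ)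
    (hc2 : c2 ≠ 0 → 2 < s.card) (h1 : 1 < s.card) :
    ∑ A ∈ s.powerset, ((-1:ℤ)^A.card * (c2 * (A.card.choose 2 : ℤ) + c1 * A.card + c0)
      + (if A.card = 0 then d0 else if A.card = 1 then d1 else 0))
    = d0 + d1 * s.card := by
  rw [sum_add_distrib]
  have e1 : ∑ A ∈ s.powerset, (-1:ℤ)^A.card * (c2 * (A.card.choose 2:ℤ) + c1 * A.card + c0)
      = c2 * (∑ A ∈ s.powerset, (-1:ℤ)^A.card * (A.card.choose 2 : ℤ))
      + c1 * (∑ A ∈ s.powerset, (-1:ℤ)^A.card * (A.card.choose 1 : ℤ))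
      + c0 * (∑ A ∈ s.powerset, (-1:ℤ)^A.card * (A.card.choose 0 : ℤ)) := by
    rw [mul_sum, mul_sum, mul_sum, ← sum_add_distrib, ← sum_add_distrib]
    refine sum_congr rfl fun A _ => ?_
    simp only [Nat.choose_one_right, Nat.choose_zero_right, Nat.cast_one]
    ring
  have z1 : ∑ A ∈ s.powerset, (-1:ℤ)^A.card * (A.card.choose 1 : ℤ) = 0 := altsum 1 s h1
  have z0 : ∑ A ∈ s.powerset, (-1:ℤ)^A.card * (A.card.choose 0 : ℤ) = 0 := by
    simpa using sum_powerset_neg_one_pow_card_of_nonempty (card_pos.mp (by omega))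
  have z2 : c2 * (∑ A ∈ s.powerset, (-1:ℤ)^A.card * (A.card.choose 2 : ℤ)) = 0 := by
    rcases eq_or_ne c2 0 with h | h
    · rw [h, zero_mul]
    · rw [altsum 2 s (hc2 h), mul_zero]
  rw [e1, z1, z0, z2]
  have e2 : ∑ A ∈ s.powerset, (if A.card = 0 then d0 else if A.card = 1 then d1 else 0)
      = ∑ A ∈ s.powerset, ((if A.card = 0 then d0 else 0) + (if A.card = 1 then d1 else 0)) := by
    refine sum_congr rfl fun A _ => ?_
    split_ifs <;> omega
  have f0 : ∑ A ∈ s.powerset, (if A.card = 0 then d0 else 0) = d0 := by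
    rw [← sum_filter, ← powersetCard_eq_filter, sum_const, card_powersetCard,
      Nat.choose_zero_right, one_smul]
  have f1 : ∑ A ∈ s.powerset, (if A.card = 1 then d1 else 0) = d1 * s.card := by
    rw [← sum_filter, ← powersetCard_eq_filter, sum_const, card_powersetCard,
      Nat.choose_one_right, nsmul_eq_mul, mul_comm]
  rw [e2, sum_add_distrib, f0, f1]
  ring

private lemma choose2_shift (k : ℕ) : (k+2).choose 2 = k.choose 2 + 2*k + 1 := by
  simp [Nat.choose_succ_succ, Nat.choose_one_right]
  omega

private lemma pA (k : ℕ) : (-1:ℤ)^k * (((k-2).choose 2 : ℕ) : ℤ)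
    = (-1:ℤ)^k * (1 * (k.choose 2 : ℤ) + (-2) * k + 3)
      + (if k = 0 then (-3:ℤ) else if k = 1 then 1 else 0) := by
  match k with
  | 0 => norm_num
  | 1 => norm_num
  | (n+2) =>
    have h : n + 2 - 2 = n := by omega
    rw [h, if_neg (by omega), if_neg (by omega), choose2_shift]
    push_cast
    ring

private lemma pB (k : ℕ) : (-1:ℤ)^k * ((((k-1).choose 2 : ℕ) : ℤ) - (((k-2).choose 2 : ℕ) : ℤ))
    = (-1:ℤ)^k * (0 * (k.choose 2 : ℤ) + 1 * k + (-2))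
      + (if k = 0 then (2:ℤ) else if k = 1 then -1 else 0) := by
  match k with
  | 0 => norm_num
  | 1 => norm_num
  | (n+2) =>
    have h1 : n + 2 - 1 = n + 1 := by omega
    have h2 : n + 2 - 2 = n := by omega
    have h3 : (n+1).choose 2 = n.choose 2 + n := by
      simp [Nat.choose_succ_succ, Nat.choose_one_right]
      omega
    rw [h1, h2, if_neg (by omega), if_neg (by omega), h3]
    push_cast
    ring


private lemma classSum {β : Type*} [DecidableEq β] (P : Finset β) :
    ∑ A ∈ P.powerset.erase ∅,
      (-1:ℤ)^A.card * (((A.card - 1).choose 2 : ℤ) - ((A.card - 2).choose 2 : ℤ))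
    = (if 2 ≤ P.card then 2 - (P.card:ℤ) else 0) := by
  rw [sum_erase _ (by simp)]
  rcases lt_or_ge P.card 2 with hlt | hge
  · rw [if_neg (by omega)]
    interval_cases h : P.card
    · rw [card_eq_zero.mp h]
      simp
    · obtain ⟨e, rfl⟩ := card_eq_one.mp h
      have hps : ({e} : Finset β).powerset = {∅, {e}} := by
        ext A
        simp [subset_singleton_iff]
      rw [hps]
      simp
  · rw [if_pos hge]
    calc ∑ A ∈ P.powerset,
          (-1:ℤ)^A.card * (((A.card - 1).choose 2 : ℤ) - ((A.card - 2).choose 2 : ℤ))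
        = ∑ A ∈ P.powerset,
            ((-1:ℤ)^A.card * (0 * (A.card.choose 2 : ℤ) + 1 * A.card + (-2))
             + (if A.card = 0 then (2:ℤ) else if A.card = 1 then -1 else 0)) :=
          sum_congr rfl fun A _ => pB A.card
      _ = 2 + (-1) * P.card := sum_shape P 0 1 (-2) 2 (-1) (fun h => absurd rfl h) (by omega)
      _ = 2 - (P.card:ℤ) := by ring

variable {α : Type*} [Fintype α] [DecidableEq α] {rk : Finset α → ℕ}

/-! ### Basic rank facts -/

private lemma rk_empty (hrk : IsRankFn rk) : rk ∅ = 0 := by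
  have := hrk.1 ∅
  simpa using this

private lemma rk_singleton (hrk : IsRankFn rk) (hl : Loopless rk) (e : α) : rk {e} = 1 := by
  have h1 := hrk.1 {e}
  have h2 := hl e
  simp only [card_singleton] at h1
  omega

private lemma rk_pos (hrk : IsRankFn rk) (hl : Loopless rk) {A : Finset α}
    (hA : A.Nonempty) : 1 ≤ rk A := by
  obtain ⟨a, ha⟩ := hA
  calc 1 = rk {a} := (rk_singleton hrk hl a).symm
  _ ≤ rk A := hrk.2.1 _ _ (singleton_subset_iff.mpr ha)

private lemma parallel_refl (hrk : IsRankFn rk) (hl : Loopless rk) (e : α) :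
    Parallel rk e e := by
  have h : ({e, e} : Finset α) = {e} := by simp
  exact ⟨by rw [h]; exact rk_singleton hrk hl e, rk_singleton hrk hl e, rk_singleton hrk hl e⟩

private lemma parallel_symm (hrk : IsRankFn rk) {e f : α} (h : Parallel rk e f) :
    Parallel rk f e := by
  refine ⟨?_, h.2.2, h.2.1⟩
  rw [pair_comm]
  exact h.1

private lemma parallel_trans (hrk : IsRankFn rk) (hl : Loopless rk) {e f g : α}
    (h1 : Parallel rk e f) (h2 : Parallel rk f g) : Parallel rk e g := by
  refine ⟨?_, h1.2.1, h2.2.2⟩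
  have hu : ({e,f} : Finset α) ∪ {f,g} = {e,f,g} := by
    ext x; simp only [mem_union, mem_insert, mem_singleton]; tauto
  have hsub := hrk.2.2 {e,f} {f,g}
  have hmem : f ∈ ({e,f} : Finset α) ∩ {f,g} := by simp
  have hone : 1 ≤ rk (({e,f} : Finset α) ∩ {f,g}) := rk_pos hrk hl ⟨f, hmem⟩
  rw [hu, h1.1, h2.1] at hsub
  have hsubset : ({e,g} : Finset α) ⊆ {e,f,g} := by
    intro x; simp only [mem_insert, mem_singleton]; tauto
  have hle := hrk.2.1 _ _ hsubset
  have hge : 1 ≤ rk ({e,g} : Finset α) := rk_pos hrk hl ⟨e, by simp⟩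
  omega

private lemma rk_insert_parallel (hrk : IsRankFn rk) (hl : Loopless rk) (e : α) :
    ∀ (A : Finset α), (∀ f ∈ A, Parallel rk e f) → rk (insert e A) = 1 := by
  intro A
  induction A using Finset.induction_on with
  | empty => intro _; simpa using rk_singleton hrk hl e
  | insert f A hfA ih =>
    intro hpar
    have hef : Parallel rk e f := hpar f (mem_insert_self f A)
    have hA : rk (insert e A) = 1 := ih (fun g hg => hpar g (mem_insert_of_mem hg))
    have hu : insert e A ∪ ({e,f} : Finset α) = insert e (insert f A) := by
      ext x; simp only [mem_union, mem_insert, mem_singleton]; tauto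
    have hsub := hrk.2.2 (insert e A) {e,f}
    have hint : 1 ≤ rk (insert e A ∩ ({e,f} : Finset α)) :=
      rk_pos hrk hl ⟨e, mem_inter.mpr ⟨mem_insert_self e A, by simp⟩⟩
    have hpos : 1 ≤ rk (insert e (insert f A)) :=
      rk_pos hrk hl ⟨e, mem_insert_self e _⟩
    rw [hu, hA, hef.1] at hsub
    omega

private lemma subset_class_rk_one (hrk : IsRankFn rk) (hl : Loopless rk) {P A : Finset α}
    (hP : IsParallelClass rk Finset.univ P) (hA : A ⊆ P) (hne : A.Nonempty) : rk A = 1 := by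
  obtain ⟨a, ha⟩ := hne
  have hpar : ∀ f ∈ A, Parallel rk a f := by
    intro f hf
    rcases eq_or_ne a f with rfl | hne'
    · exact parallel_refl hrk hl a
    · exact hP.2.2.1.1 a (hA ha) f (hA hf) hne'
  have h := rk_insert_parallel hrk hl a A hpar
  rwa [insert_eq_self.mpr ha] at h

/-! ### Parallel classes -/

private noncomputable def pcl (rk : Finset α → ℕ) (e : α) : Finset α :=
  Finset.univ.filter (fun f => Parallel rk e f)

private lemma mem_pcl_self (hrk : IsRankFn rk) (hl : Loopless rk) (e : α) :
    e ∈ pcl rk e := by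
  simp only [pcl, mem_filter]
  exact ⟨mem_univ e, parallel_refl hrk hl e⟩

private lemma pcl_pairwise (hrk : IsRankFn rk) (hl : Loopless rk) (e : α) :
    PairwiseParallel rk (pcl rk e) := by
  constructor
  · intro f hf g hg hfg
    simp only [pcl, mem_filter] at hf hg
    exact parallel_trans hrk hl (parallel_symm hrk hf.2) hg.2
  · intro f _
    exact hl f

private lemma pcl_isClass (hrk : IsRankFn rk) (hl : Loopless rk) (e : α) :
    IsParallelClass rk Finset.univ (pcl rk e) := by
  refine ⟨subset_univ _, ⟨e, mem_pcl_self hrk hl e⟩, pcl_pairwise hrk hl e, ?_⟩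
  intro Q _ hQ hpp
  obtain ⟨q, hqQ, hq⟩ := exists_of_ssubset hQ
  have he : e ∈ Q := hQ.1 (mem_pcl_self hrk hl e)
  have hq_ne : e ≠ q := by
    rintro rfl
    exact hq (mem_pcl_self hrk hl e)
  have hpar : Parallel rk e q := hpp.1 e he q hqQ hq_ne
  exact hq (mem_filter.mpr ⟨mem_univ _, hpar⟩)

private lemma pcl_mem_classes (hrk : IsRankFn rk) (hl : Loopless rk) (e : α) :
    pcl rk e ∈ parallelClasses rk Finset.univ := by
  simp only [parallelClasses, mem_filter]
  exact ⟨mem_univ _, pcl_isClass hrk hl e⟩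

private lemma class_eq_pcl (hrk : IsRankFn rk) (hl : Loopless rk) {P : Finset α} {a : α}
    (hP : IsParallelClass rk Finset.univ P) (ha : a ∈ P) : P = pcl rk a := by
  have hsub : P ⊆ pcl rk a := by
    intro f hf
    rcases eq_or_ne a f with rfl | hne
    · exact mem_pcl_self hrk hl a
    · exact mem_filter.mpr ⟨mem_univ _, hP.2.2.1.1 a ha f hf hne⟩
  by_contra hne
  exact hP.2.2.2 (pcl rk a) (subset_univ _)
    (Finset.ssubset_iff_subset_ne.mpr ⟨hsub, hne⟩) (pcl_pairwise hrk hl a)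

private lemma rk_one_subset_pcl (hrk : IsRankFn rk) (hl : Loopless rk) {A : Finset α}
    (h : rk A = 1) {a : α} (ha : a ∈ A) : A ⊆ pcl rk a := by
  intro f hf
  simp only [pcl, mem_filter]
  refine ⟨mem_univ f, ?_⟩
  rcases eq_or_ne a f with rfl | hne
  · exact parallel_refl hrk hl a
  · refine ⟨?_, rk_singleton hrk hl a, rk_singleton hrk hl f⟩
    have hsub : ({a, f} : Finset α) ⊆ A := by
      intro x hx
      simp only [mem_insert, mem_singleton] at hx
      rcases hx with rfl | rfl <;> assumption
    have hle := hrk.2.1 _ _ hsub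
    have hge : 1 ≤ rk ({a, f} : Finset α) := rk_pos hrk hl ⟨a, by simp⟩
    omega

end Aux

set_option maxHeartbeats 2000000 in
/-- for a rank-2 matroid with no loops and no coloops,
`Σ_{A ⊆ X} (-1)^{|A|} C(|A| - rk(A), 2)` equals `1` if `p(M) = 2`,
and equals `p'(M)` if `p(M) = 3`. -/
theorem stmt19 {α : Type*} [Fintype α] [DecidableEq α]
    (rk : Finset α → ℕ) (hrk : IsRankFn rk) (hl : Loopless rk)
    (hnc : ∀ e : α, rk (Finset.univ.erase e) ≠ rk Finset.univ - 1)
    (h2 : rk Finset.univ = 2) :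
    (pNum rk Finset.univ = 2 →
      ∑ A : Finset α, (-1 : ℤ) ^ A.card * ((A.card - rk A).choose 2 : ℤ) = 1) ∧
    (pNum rk Finset.univ = 3 →
      ∑ A : Finset α, (-1 : ℤ) ^ A.card * ((A.card - rk A).choose 2 : ℤ) =
        (pNum' rk Finset.univ : ℤ)) := by
  classical
  have hmono := hrk.2.1
  set n := Fintype.card α with hn
  set Pc := parallelClasses rk Finset.univ with hPdef
  have hclassmem : ∀ P ∈ Pc, IsParallelClass rk Finset.univ P := by
    intro P hP
    rw [hPdef, parallelClasses, mem_filter] at hP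
    exact hP.2
  have hone : ∀ P ∈ Pc, 1 ≤ P.card := fun P hP => card_pos.mpr (hclassmem P hP).2.1
  have hclass_eq : ∀ P ∈ Pc, ∀ a ∈ P, P = pcl rk a :=
    fun P hP a ha => class_eq_pcl hrk hl (hclassmem P hP) ha
  have hdisj : ∀ P ∈ Pc, ∀ Q ∈ Pc, P ≠ Q → Disjoint (id P) (id Q) := by
    intro P hP Q hQ hne
    rw [id, id, disjoint_left]
    intro a haP haQ
    exact hne ((hclass_eq P hP a haP).trans (hclass_eq Q hQ a haQ).symm)
  have hbiUnion : Pc.biUnion id = Finset.univ := by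
    apply eq_univ_of_forall
    intro e
    exact mem_biUnion.mpr ⟨pcl rk e, pcl_mem_classes hrk hl e, mem_pcl_self hrk hl e⟩
  have hsizes : ∑ P ∈ Pc, P.card = n := by
    have hcb := card_biUnion hdisj
    rw [hbiUnion, card_univ] at hcb
    simpa using hcb.symm
  have key : 3 ≤ n → ∑ A : Finset α, (-1 : ℤ) ^ A.card * ((A.card - rk A).choose 2 : ℤ)
      = (Pc.card : ℤ) + ((Pc.filter fun P => 2 ≤ P.card).card : ℤ) - n
        + (-3 + 1 * (n : ℤ)) := by
    intro hn3
    have hcardu : (Finset.univ : Finset α).card = n := card_univ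
    have hstep0 : ∑ A : Finset α, (-1 : ℤ) ^ A.card * ((A.card - rk A).choose 2 : ℤ)
        = ∑ A ∈ (Finset.univ : Finset α).powerset,
            (-1 : ℤ) ^ A.card * ((A.card - rk A).choose 2 : ℤ) := by
      rw [powerset_univ]
    have hsplit : ∑ A ∈ (Finset.univ : Finset α).powerset,
          (-1:ℤ)^A.card * ((A.card - rk A).choose 2 : ℤ)
        = (∑ A ∈ (Finset.univ : Finset α).powerset,
            (-1:ℤ)^A.card * ((A.card - 2).choose 2 : ℤ))
        + (∑ A ∈ (Finset.univ : Finset α).powerset,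
            ((-1:ℤ)^A.card * ((A.card - rk A).choose 2 : ℤ)
              - (-1:ℤ)^A.card * ((A.card - 2).choose 2 : ℤ))) := by
      rw [← sum_add_distrib]
      exact sum_congr rfl fun A _ => by ring
    have hfirst : ∑ A ∈ (Finset.univ : Finset α).powerset,
        (-1:ℤ)^A.card * ((A.card - 2).choose 2 : ℤ) = -3 + 1 * (n:ℤ) := by
      calc ∑ A ∈ (Finset.univ : Finset α).powerset,
            (-1:ℤ)^A.card * ((A.card - 2).choose 2 : ℤ)
          = ∑ A ∈ (Finset.univ : Finset α).powerset,
              ((-1:ℤ)^A.card * (1 * (A.card.choose 2 : ℤ) + (-2) * A.card + 3)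
               + (if A.card = 0 then (-3:ℤ) else if A.card = 1 then 1 else 0)) :=
            sum_congr rfl fun A _ => pA A.card
        _ = -3 + 1 * ((Finset.univ : Finset α).card : ℤ) :=
            sum_shape _ 1 (-2) 3 (-3) 1 (fun _ => by omega) (by omega)
        _ = -3 + 1 * (n:ℤ) := by rw [hcardu]
    set D := Pc.biUnion (fun P => P.powerset.erase ∅) with hD
    have hDsub : D ⊆ (Finset.univ : Finset α).powerset :=
      fun A _ => mem_powerset.mpr (subset_univ A)
    have hzero : ∀ A ∈ (Finset.univ : Finset α).powerset, A ∉ D →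
        (-1:ℤ)^A.card * ((A.card - rk A).choose 2 : ℤ)
          - (-1:ℤ)^A.card * ((A.card - 2).choose 2 : ℤ) = 0 := by
      intro A _ hA
      rcases A.eq_empty_or_nonempty with rfl | hAne
      · simp [rk_empty hrk]
      · rcases Nat.lt_or_ge (rk A) 2 with hlt | hge
        · have h1 : rk A = 1 := by
            have := rk_pos hrk hl hAne
            omega
          obtain ⟨a, ha⟩ := hAne
          exfalso
          apply hA
          rw [hD]
          exact mem_biUnion.mpr ⟨pcl rk a, pcl_mem_classes hrk hl a,
            mem_erase.mpr ⟨nonempty_iff_ne_empty.mp ⟨a, ha⟩,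
              mem_powerset.mpr (rk_one_subset_pcl hrk hl h1 ha)⟩⟩
        · have hA2 : rk A = 2 := le_antisymm (h2 ▸ hmono A Finset.univ (subset_univ A)) hge
          rw [hA2]
          ring
    have hpd : Set.PairwiseDisjoint (↑Pc) (fun P : Finset α => P.powerset.erase ∅) := by
      intro P hP Q hQ hne
      simp only [Function.onFun]
      rw [Finset.disjoint_left]
      intro A hAP hAQ
      have hAne : A ≠ ∅ := (mem_erase.mp hAP).1
      obtain ⟨a, ha⟩ := nonempty_iff_ne_empty.mpr hAne
      have haP : a ∈ P := mem_powerset.mp (mem_erase.mp hAP).2 ha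
      have haQ : a ∈ Q := mem_powerset.mp (mem_erase.mp hAQ).2 ha
      exact hne ((hclass_eq P (mem_coe.mp hP) a haP).trans
        (hclass_eq Q (mem_coe.mp hQ) a haQ).symm)
    have hinner : ∀ P ∈ Pc, ∑ A ∈ P.powerset.erase ∅,
        ((-1:ℤ)^A.card * ((A.card - rk A).choose 2 : ℤ)
          - (-1:ℤ)^A.card * ((A.card - 2).choose 2 : ℤ))
        = (if 2 ≤ P.card then 2 - (P.card:ℤ) else 0) := by
      intro P hP
      have hstep : ∀ A ∈ P.powerset.erase ∅,
          (-1:ℤ)^A.card * ((A.card - rk A).choose 2 : ℤ)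
            - (-1:ℤ)^A.card * ((A.card - 2).choose 2 : ℤ)
          = (-1:ℤ)^A.card * (((A.card - 1).choose 2 : ℤ) - ((A.card - 2).choose 2 : ℤ)) := by
        intro A hA
        have h1 : rk A = 1 := subset_class_rk_one hrk hl (hclassmem P hP)
          (mem_powerset.mp (mem_erase.mp hA).2) (nonempty_iff_ne_empty.mpr (mem_erase.mp hA).1)
        rw [h1]
        ring
      rw [sum_congr rfl hstep, classSum P]
    have hsecond : ∑ A ∈ (Finset.univ : Finset α).powerset,
        ((-1:ℤ)^A.card * ((A.card - rk A).choose 2 : ℤ)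
          - (-1:ℤ)^A.card * ((A.card - 2).choose 2 : ℤ))
        = ∑ P ∈ Pc, (if 2 ≤ P.card then 2 - (P.card:ℤ) else 0) := by
      rw [← sum_subset hDsub hzero, hD, sum_biUnion hpd]
      exact sum_congr rfl hinner
    have hclasssum : ∑ P ∈ Pc, (if 2 ≤ P.card then 2 - (P.card:ℤ) else 0)
        = (Pc.card : ℤ) + ((Pc.filter fun P => 2 ≤ P.card).card : ℤ) - n := by
      rw [← sum_filter]
      have hsum_split : ∑ P ∈ Pc.filter (fun P => 2 ≤ P.card), (P.card:ℤ)
          + ∑ P ∈ Pc.filter (fun P => ¬ 2 ≤ P.card), (P.card:ℤ) = (n:ℤ) := by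
        rw [sum_filter_add_sum_filter_not]
        exact_mod_cast hsizes
      have hT'1 : ∑ P ∈ Pc.filter (fun P => ¬ 2 ≤ P.card), (P.card:ℤ)
          = ((Pc.filter (fun P => ¬ 2 ≤ P.card)).card : ℤ) := by
        rw [sum_congr rfl (fun P hP => ?_), sum_const, nsmul_eq_mul, mul_one]
        have h1 := hone P (mem_filter.mp hP).1
        have hP2 := (mem_filter.mp hP).2
        have hc : P.card = 1 := by omega
        rw [hc, Nat.cast_one]
      have hcards : (Pc.filter (fun P => 2 ≤ P.card)).card
          + (Pc.filter (fun P => ¬ 2 ≤ P.card)).card = Pc.card :=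
        card_filter_add_card_filter_not (p := fun P : Finset α => 2 ≤ P.card)
      have hcards' : ((Pc.filter (fun P => 2 ≤ P.card)).card : ℤ)
          + ((Pc.filter (fun P => ¬ 2 ≤ P.card)).card : ℤ) = (Pc.card : ℤ) := by
        exact_mod_cast hcards
      have hsc : ∑ P ∈ Pc.filter (fun P => 2 ≤ P.card), ((2:ℤ) - P.card)
          = 2 * ((Pc.filter (fun P => 2 ≤ P.card)).card : ℤ)
            - ∑ P ∈ Pc.filter (fun P => 2 ≤ P.card), (P.card:ℤ) := by
        rw [sum_sub_distrib, sum_const, nsmul_eq_mul]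
        ring
      rw [hsc]
      linarith
    rw [hstep0, hsplit, hfirst, hsecond, hclasssum]
    ring
  constructor
  · intro hp2
    have hp2' : Pc.card = 2 := hp2
    have hbig : ∀ P ∈ Pc, 2 ≤ P.card := by
      intro P hP
      by_contra hPc
      have h1 := hone P hP
      have hcard1 : P.card = 1 := by omega
      obtain ⟨e, rfl⟩ := card_eq_one.mp hcard1
      obtain ⟨Q, hQmem, hQne⟩ := exists_mem_ne (s := Pc) (by omega) ({e} : Finset α)
      have hPQ : Pc = {({e} : Finset α), Q} := by
        symm
        apply eq_of_subset_of_card_le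
        · intro R hR
          rcases mem_insert.mp hR with rfl | hR'
          · exact hP
          · rw [mem_singleton.mp hR']
            exact hQmem
        · rw [card_insert_of_notMem (fun h => hQne (mem_singleton.mp h).symm),
            card_singleton, hp2']
      have heQ : e ∉ Q := by
        intro heQ
        exact hQne ((hclass_eq Q hQmem e heQ).trans
          (hclass_eq {e} hP e (mem_singleton_self e)).symm)
      have herase : Finset.univ.erase e ⊆ Q := by
        intro f hf
        have hf_ne : f ≠ e := (mem_erase.mp hf).1
        have hfB : f ∈ Pc.biUnion id := by
          rw [hbiUnion]
          exact mem_univ f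
        obtain ⟨R, hR, hfR⟩ := mem_biUnion.mp hfB
        rw [hPQ] at hR
        rcases mem_insert.mp hR with rfl | hR'
        · exact absurd (mem_singleton.mp hfR) hf_ne
        · rwa [mem_singleton.mp hR'] at hfR
      have hQne' : (Finset.univ.erase e).Nonempty := by
        obtain ⟨q, hq⟩ := (hclassmem Q hQmem).2.1
        exact ⟨q, mem_erase.mpr ⟨fun h => heQ (h ▸ hq), mem_univ q⟩⟩
      have hrk1 : rk (Finset.univ.erase e) = 1 :=
        subset_class_rk_one hrk hl (hclassmem Q hQmem) herase hQne'
      exact hnc e (by rw [hrk1, h2])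
    have hn4 : 4 ≤ n := by
      have h4 := card_nsmul_le_sum Pc (fun P => P.card) 2 hbig
      rw [hsizes, hp2'] at h4
      simpa using h4
    have hfilter : Pc.filter (fun P => 2 ≤ P.card) = Pc := filter_true_of_mem hbig
    rw [key (by omega), hfilter, hp2']
    push_cast
    ring
  · intro hp3
    have hp3' : Pc.card = 3 := hp3
    have hn3 : 3 ≤ n := by
      have h3 := card_nsmul_le_sum Pc (fun P => P.card) 1 hone
      rw [hsizes, hp3'] at h3
      simpa using h3
    have hp' : pNum' rk Finset.univ = (Pc.filter fun P => 2 ≤ P.card).card := rfl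
    rw [key hn3, hp3', hp']
    push_cast
    ring
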